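/- Let m ≥ 2, let d ∈ V, and set ε = +1 if ϑ_0(d) = 0 and ε = −1 if ϑ_0(d) = 1. The simple graph whose vertex set is {a ∈ V : ϑ_d(a) = 1}, with distinct vertices a, b adjacent if and only if ⟨a,b⟩ = 0, is strongly regular with parameters v = 2^{2m−1} − ε·2^{m−1}, k = 2^{2m−2} − 1, λ = 2^{2m−3} − 2, μ = 2^{2m−3} + ε·2^{m−2}. (This graph is isomorphic to the polar graph NO^ε(2m,2), whose vertices are the points of PG(2m−1,2) off the quadric Q^ε(2m−1,2) of type ε, adjacent when they span a tangent line to the quadric.) -/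

import Mathlib

open Finset

/-- The symplectic bilinear form `⟨u,v⟩ = ∑_{i<m} (u_i v_{m+i} + u_{m+i} v_i)` on `(F_2)^{2m}`. -/
def symp (m : ℕ) (u v : Fin (2*m) → ZMod 2) : ZMod 2 :=
  ∑ i : Fin m, (u ⟨i.1, by omega⟩ * v ⟨m + i.1, by omega⟩ +
    u ⟨m + i.1, by omega⟩ * v ⟨i.1, by omega⟩)

/-- The quadratic form `ϑ_0(u) = ∑_{i<m} u_i u_{m+i}`. -/
def th0 (m : ℕ) (u : Fin (2*m) → ZMod 2) : ZMod 2 :=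
  ∑ i : Fin m, u ⟨i.1, by omega⟩ * u ⟨m + i.1, by omega⟩

/-- The quadratic form `ϑ_a(u) = ϑ_0(u) + ⟨a,u⟩`. -/
def th (m : ℕ) (a u : Fin (2*m) → ZMod 2) : ZMod 2 :=
  th0 m u + symp m a u

/-!
Write `χ(x) = (-1)^x`. In the coordinates of the `m` hyperbolic pairs `(u_i, u_{m+i})`, character
sums over `V` factor into products of sums over `(F_2)^2`, which gives
`∑_c χ⟨w,c⟩ = 2^{2m} [w = 0]` and the Gauss sum `∑_c χ(ϑ_0(c) + ⟨w,c⟩) = 2^m χ(ϑ_0(w))`.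
The indicator of `ϑ_d(c) = 1, ⟨a,c⟩ = ⟨b,c⟩ = 0` is `(1 - χ ϑ_d(c))(1 + χ⟨a,c⟩)(1 + χ⟨b,c⟩) / 8`;
expanding it expresses the number of such `c` through these sums at `w ∈ {0, a, b, a + b}`, and
`ϑ_0(d + w) = ϑ_0(d) + ϑ_d(w)`. Taking `a = b = 0`, then `b = 0` with `a` a vertex, then two
distinct vertices `a, b` yields `v`, `k`, and the common-neighbour counts, which for `λ` and `μ`
differ only through `χ⟨a,b⟩` and whether `a, b` themselves are counted.
-/

-- `(-1)^x`, written so that `chi (th0 m d)` is literally the `ε` of the theorem.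
def chi (x : ZMod 2) : ℤ := if x = 0 then 1 else -1

lemma chi_zero : chi 0 = 1 := rfl

lemma chi_one : chi 1 = -1 := rfl

lemma chi_add (x y : ZMod 2) : chi (x + y) = chi x * chi y := by
  revert x y; decide

lemma chi_sum {ι : Type*} (s : Finset ι) (f : ι → ZMod 2) :
    chi (∑ i ∈ s, f i) = ∏ i ∈ s, chi (f i) := by
  induction s using Finset.cons_induction with
  | empty => rfl
  | cons a s ha ih => rw [sum_cons, prod_cons, chi_add, ih]

lemma symp_comm (m : ℕ) (u v : Fin (2*m) → ZMod 2) : symp m u v = symp m v u := by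
  unfold symp
  exact sum_congr rfl fun i _ => by ring

lemma symp_self (m : ℕ) (u : Fin (2*m) → ZMod 2) : symp m u u = 0 := by
  unfold symp
  exact sum_eq_zero fun i _ => by rw [mul_comm]; exact CharTwo.add_self_eq_zero _

lemma symp_add_left (m : ℕ) (u v w : Fin (2*m) → ZMod 2) :
    symp m (u + v) w = symp m u w + symp m v w := by
  simp only [symp, Pi.add_apply, ← sum_add_distrib]
  exact sum_congr rfl fun i _ => by ring

lemma symp_add_right (m : ℕ) (u v w : Fin (2*m) → ZMod 2) :
    symp m u (v + w) = symp m u v + symp m u w := by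
  rw [symp_comm, symp_add_left, symp_comm m v, symp_comm m w]

lemma symp_zero_left (m : ℕ) (v : Fin (2*m) → ZMod 2) : symp m 0 v = 0 := by
  simp [symp]

lemma th0_add (m : ℕ) (u v : Fin (2*m) → ZMod 2) :
    th0 m (u + v) = th0 m u + th0 m v + symp m u v := by
  simp only [th0, symp, Pi.add_apply, ← sum_add_distrib]
  exact sum_congr rfl fun i _ => by ring

lemma th0_add_eq_add_th (m : ℕ) (d u : Fin (2*m) → ZMod 2) :
    th0 m (d + u) = th0 m d + th m d u := by
  rw [th0_add, th, add_assoc]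

lemma th_add (m : ℕ) (d u v : Fin (2*m) → ZMod 2) :
    th m d (u + v) = th m d u + th m d v + symp m u v := by
  simp only [th, th0_add, symp_add_right]
  ring

lemma th_zero (m : ℕ) (d : Fin (2*m) → ZMod 2) : th m d 0 = 0 := by
  simp [th, th0, symp]

def pairEquiv (m : ℕ) : (Fin (2*m) → ZMod 2) ≃ (Fin m → ZMod 2 × ZMod 2) where
  toFun u i := (u ⟨i, by omega⟩, u ⟨m + i, by omega⟩)
  invFun p j := if hj : j < m then (p ⟨j, hj⟩).1 else (p ⟨j - m, by omega⟩).2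
  left_inv u := by
    funext j
    by_cases hj : j < m
    · simp [hj]
    · simp only [hj, dif_neg, not_false_iff]
      exact congrArg u (Fin.ext (by simp; omega))
  right_inv p := by
    funext i
    have hi : ¬ m + i < m := by omega
    simp [hi]

lemma sum_prod_pairEquiv {R : Type*} [CommSemiring R] (m : ℕ)
    (φ : Fin m → ZMod 2 × ZMod 2 → R) :
    ∑ u : Fin (2*m) → ZMod 2, ∏ i, φ i (pairEquiv m u i) = ∏ i, ∑ p, φ i p := by
  rw [Fintype.prod_sum, ← (pairEquiv m).sum_comp]

def pairForm (x y : ZMod 2 × ZMod 2) : ZMod 2 := x.1 * y.2 + x.2 * y.1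

lemma th0_eq_sum_pairEquiv (m : ℕ) (u : Fin (2*m) → ZMod 2) :
    th0 m u = ∑ i, (pairEquiv m u i).1 * (pairEquiv m u i).2 := rfl

lemma symp_eq_sum_pairEquiv (m : ℕ) (u v : Fin (2*m) → ZMod 2) :
    symp m u v = ∑ i, pairForm (pairEquiv m u i) (pairEquiv m v i) := rfl

lemma sum_chi_symp (m : ℕ) (w : Fin (2*m) → ZMod 2) :
    ∑ c : Fin (2*m) → ZMod 2, chi (symp m w c) = if w = 0 then 2 ^ (2*m) else 0 := by
  have hpair : ∀ x, ∑ p, chi (pairForm x p) = if x = 0 then 4 else 0 := by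
    unfold pairForm; decide
  calc ∑ c, chi (symp m w c)
        = ∑ c, ∏ i, chi (pairForm (pairEquiv m w i) (pairEquiv m c i)) := by
        simp only [symp_eq_sum_pairEquiv, chi_sum]
    _ = ∏ i, ∑ p, chi (pairForm (pairEquiv m w i) p) :=
        sum_prod_pairEquiv m fun i p => chi (pairForm (pairEquiv m w i) p)
    _ = if w = 0 then 2 ^ (2*m) else 0 := by
        have hw : (∀ i, pairEquiv m w i = 0) ↔ w = 0 := by
          rw [← (pairEquiv m).injective.eq_iff' rfl, funext_iff]
          rfl
        simp only [hpair, prod_ite_zero, mem_univ, forall_const, hw, prod_const, card_univ,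
          Fintype.card_fin, pow_mul]
        norm_num

lemma sum_chi_th0_add_symp (m : ℕ) (w : Fin (2*m) → ZMod 2) :
    ∑ c : Fin (2*m) → ZMod 2, chi (th0 m c + symp m w c) = 2 ^ m * chi (th0 m w) := by
  have hpair :
      ∀ x, ∑ p : ZMod 2 × ZMod 2, chi (p.1 * p.2 + pairForm x p) = 2 * chi (x.1 * x.2) := by
    unfold pairForm; decide
  calc ∑ c, chi (th0 m c + symp m w c)
        = ∑ c, ∏ i, chi ((pairEquiv m c i).1 * (pairEquiv m c i).2 +
            pairForm (pairEquiv m w i) (pairEquiv m c i)) := by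
        simp only [th0_eq_sum_pairEquiv, symp_eq_sum_pairEquiv, ← sum_add_distrib, chi_sum]
    _ = ∏ i, ∑ p : ZMod 2 × ZMod 2, chi (p.1 * p.2 + pairForm (pairEquiv m w i) p) :=
        sum_prod_pairEquiv m fun i p => chi (p.1 * p.2 + pairForm (pairEquiv m w i) p)
    _ = 2 ^ m * chi (th0 m w) := by
        simp only [hpair, prod_mul_distrib, prod_const, card_univ, Fintype.card_fin,
          th0_eq_sum_pairEquiv, chi_sum]

lemma eight_mul_card_filter (m : ℕ) (d a b : Fin (2*m) → ZMod 2) :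
    8 * (#{c | th m d c = 1 ∧ symp m a c = 0 ∧ symp m b c = 0} : ℤ) =
      ([0, a, b, a + b].map fun w =>
        (if w = 0 then 2 ^ (2*m) else 0) - 2 ^ m * chi (th0 m (d + w))).sum := by
  have hind : ∀ x y z : ZMod 2, (1 - chi x) * (1 + chi y) * (1 + chi z) =
      if x = 1 ∧ y = 0 ∧ z = 0 then 8 else 0 := by
    decide
  -- `th m d c + symp m w c = th0 m c + symp m (d + w) c`, so each product expands into the two
  -- kinds of character sums evaluated above
  have hexpand : ∀ t s y z : ZMod 2, (1 - chi (t + s)) * (1 + chi y) * (1 + chi z) =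
      (chi 0 - chi (t + s)) + (chi y - chi (t + (s + y))) + (chi z - chi (t + (s + z)))
        + (chi (y + z) - chi (t + (s + (y + z)))) := by
    decide
  calc 8 * (#{c | th m d c = 1 ∧ symp m a c = 0 ∧ symp m b c = 0} : ℤ)
      = ∑ c, (1 - chi (th m d c)) * (1 + chi (symp m a c)) * (1 + chi (symp m b c)) := by
        simp only [hind]
        rw [sum_ite, sum_const_zero, add_zero, sum_const, nsmul_eq_mul, mul_comm]
    _ = ∑ c, ([0, a, b, a + b].map fun w =>
          chi (symp m w c) - chi (th0 m c + symp m (d + w) c)).sum := by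
        refine sum_congr rfl fun c _ => ?_
        simp only [List.map_cons, List.map_nil, List.sum_cons, List.sum_nil, add_zero,
          symp_add_left, symp_zero_left, th, hexpand]
        ring
    _ = _ := by
        simp only [List.map_cons, List.map_nil, List.sum_cons, List.sum_nil, add_zero,
          sum_add_distrib, sum_sub_distrib, sum_chi_symp, sum_chi_th0_add_symp]

lemma ne_zero_of_th_eq_one {m : ℕ} {d a : Fin (2*m) → ZMod 2} (ha : th m d a = 1) : a ≠ 0 := by
  rintro rfl
  simp [th_zero] at ha

lemma chi_th0_add_of_th_eq_one {m : ℕ} {d a : Fin (2*m) → ZMod 2} (ha : th m d a = 1) :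
    chi (th0 m (d + a)) = -chi (th0 m d) := by
  rw [th0_add_eq_add_th, ha, chi_add, chi_one, mul_neg_one]

lemma two_mul_card_filter_th_eq_one (m : ℕ) (d : Fin (2*m) → ZMod 2) :
    2 * (#{c | th m d c = 1} : ℤ) = 2 ^ (2*m) - 2 ^ m * chi (th0 m d) := by
  have h := eight_mul_card_filter m d 0 0
  simp only [symp_zero_left, and_true, add_zero, List.map_cons, List.map_nil, List.sum_cons,
    List.sum_nil, if_true] at h
  linarith

lemma four_mul_card_filter_th_eq_one_symp {m : ℕ} {d a : Fin (2*m) → ZMod 2}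
    (ha : th m d a = 1) :
    4 * (#{c | th m d c = 1 ∧ symp m a c = 0} : ℤ) = 2 ^ (2*m) := by
  have h := eight_mul_card_filter m d a 0
  simp only [symp_zero_left, and_true, add_zero, List.map_cons, List.map_nil, List.sum_cons,
    List.sum_nil, if_true, if_neg (ne_zero_of_th_eq_one ha), chi_th0_add_of_th_eq_one ha] at h
  linarith

lemma eight_mul_card_filter_th_eq_one_symp_symp {m : ℕ} {d a b : Fin (2*m) → ZMod 2}
    (ha : th m d a = 1) (hb : th m d b = 1) (hab : a ≠ b) :
    8 * (#{c | th m d c = 1 ∧ symp m a c = 0 ∧ symp m b c = 0} : ℤ) =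
      2 ^ (2*m) + 2 ^ m * chi (th0 m d) * (1 - chi (symp m a b)) := by
  have h := eight_mul_card_filter m d a b
  have hchi_ab : chi (th0 m (d + (a + b))) = chi (th0 m d) * chi (symp m a b) := by
    rw [th0_add_eq_add_th, th_add, ha, hb, CharTwo.add_self_eq_zero, zero_add, chi_add]
  have hab' : a + b ≠ 0 := fun h => hab (funext fun j => CharTwo.add_eq_zero.mp (congrFun h j))
  simp only [List.map_cons, List.map_nil, List.sum_cons, List.sum_nil, if_true,
    if_neg (ne_zero_of_th_eq_one ha), if_neg (ne_zero_of_th_eq_one hb), if_neg hab', add_zero,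
    chi_th0_add_of_th_eq_one ha, chi_th0_add_of_th_eq_one hb, hchi_ab] at h
  linarith

lemma natCard_subtype_subtype {α : Type*} [Fintype α] (p q : α → Prop) [DecidablePred p]
    [DecidablePred q] : Nat.card {x : Subtype p // q x.1} = #{x | p x ∧ q x} := by
  rw [Nat.card_congr (Equiv.subtypeSubtypeEquivSubtypeInter p q), Nat.card_eq_fintype_card,
    Fintype.card_subtype]

lemma natCard_vertices {m : ℕ} (hm : 1 ≤ m) (d : Fin (2*m) → ZMod 2) :
    (Nat.card {a // th m d a = 1} : ℤ) = 2 ^ (2*m - 1) - chi (th0 m d) * 2 ^ (m - 1) := by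
  have h := two_mul_card_filter_th_eq_one m d
  rw [← pow_sub_mul_pow 2 (by omega : 1 ≤ 2*m), ← pow_sub_mul_pow 2 hm] at h
  rw [Nat.card_eq_fintype_card, Fintype.card_subtype]
  linarith

lemma natCard_neighbors {m : ℕ} (hm : 1 ≤ m) (d : Fin (2*m) → ZMod 2)
    (a : {a // th m d a = 1}) :
    (Nat.card {b : {a // th m d a = 1} // a ≠ b ∧ symp m a.1 b.1 = 0} : ℤ) =
      2 ^ (2*m - 2) - 1 := by
  have h := four_mul_card_filter_th_eq_one_symp a.2
  rw [← pow_sub_mul_pow 2 (by omega : 2 ≤ 2*m)] at h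
  have ha : a.1 ∈ ({c | th m d c = 1 ∧ symp m a.1 c = 0} : Finset _) := by
    simp [a.2, symp_self]
  have herase := card_erase_add_one ha
  simp only [ne_eq, Subtype.ext_iff]
  rw [natCard_subtype_subtype (fun c => th m d c = 1) fun c => ¬a.1 = c ∧ symp m a.1 c = 0]
  have hset : ({c | th m d c = 1 ∧ ¬a.1 = c ∧ symp m a.1 c = 0} : Finset _) =
      ({c | th m d c = 1 ∧ symp m a.1 c = 0} : Finset _).erase a.1 := by
    ext c
    simp only [mem_erase, mem_filter, mem_univ, true_and]
    tauto
  rw [hset]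
  linarith

lemma natCard_commonNeighbors {m : ℕ} (d : Fin (2*m) → ZMod 2) (a b : {a // th m d a = 1}) :
    Nat.card {c : {a // th m d a = 1} //
      (a ≠ c ∧ symp m a.1 c.1 = 0) ∧ (b ≠ c ∧ symp m b.1 c.1 = 0)} =
      #(({c | th m d c = 1 ∧ symp m a.1 c = 0 ∧ symp m b.1 c = 0} : Finset _) \ {a.1, b.1}) := by
  simp only [ne_eq, Subtype.ext_iff]
  rw [natCard_subtype_subtype (fun c => th m d c = 1)
    fun c => (¬a.1 = c ∧ symp m a.1 c = 0) ∧ (¬b.1 = c ∧ symp m b.1 c = 0)]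
  congr 1
  ext c
  simp only [mem_sdiff, mem_filter, mem_univ, true_and, mem_insert, mem_singleton]
  tauto

lemma natCard_commonNeighbors_of_adj {m : ℕ} (hm : 2 ≤ m) (d : Fin (2*m) → ZMod 2)
    (a b : {a // th m d a = 1}) (hadj : a ≠ b ∧ symp m a.1 b.1 = 0) :
    (Nat.card {c : {a // th m d a = 1} //
      (a ≠ c ∧ symp m a.1 c.1 = 0) ∧ (b ≠ c ∧ symp m b.1 c.1 = 0)} : ℤ) = 2 ^ (2*m - 3) - 2 := by
  have hab : a.1 ≠ b.1 := fun h => hadj.1 (Subtype.ext h)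
  have h := eight_mul_card_filter_th_eq_one_symp_symp a.2 b.2 hab
  rw [hadj.2, ← pow_sub_mul_pow 2 (by omega : 3 ≤ 2*m)] at h
  have hsub :
      {a.1, b.1} ⊆ ({c | th m d c = 1 ∧ symp m a.1 c = 0 ∧ symp m b.1 c = 0} : Finset _) := by
    simp [insert_subset_iff, a.2, b.2, symp_self, hadj.2, symp_comm m b.1 a.1]
  have hcard := card_sdiff_add_card_eq_card hsub
  rw [card_pair hab] at hcard
  rw [chi_zero, sub_self, mul_zero, add_zero] at h
  rw [natCard_commonNeighbors]
  linarith

lemma natCard_commonNeighbors_of_not_adj {m : ℕ} (hm : 2 ≤ m) (d : Fin (2*m) → ZMod 2)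
    (a b : {a // th m d a = 1}) (hne : a ≠ b) (hnadj : ¬(a ≠ b ∧ symp m a.1 b.1 = 0)) :
    (Nat.card {c : {a // th m d a = 1} //
      (a ≠ c ∧ symp m a.1 c.1 = 0) ∧ (b ≠ c ∧ symp m b.1 c.1 = 0)} : ℤ) =
      2 ^ (2*m - 3) + chi (th0 m d) * 2 ^ (m - 2) := by
  have hab : symp m a.1 b.1 = 1 := Fin.eq_one_of_ne_zero _ fun h => hnadj ⟨hne, h⟩
  have hba : symp m b.1 a.1 = 1 := by rw [symp_comm, hab]
  have h := eight_mul_card_filter_th_eq_one_symp_symp a.2 b.2 fun h => hne (Subtype.ext h)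
  rw [hab, ← pow_sub_mul_pow 2 (by omega : 3 ≤ 2*m), ← pow_sub_mul_pow 2 hm] at h
  have hdisj : Disjoint ({c | th m d c = 1 ∧ symp m a.1 c = 0 ∧ symp m b.1 c = 0} : Finset _)
      {a.1, b.1} := by
    simp [disjoint_insert_right, hab, hba]
  rw [chi_one] at h
  rw [natCard_commonNeighbors, sdiff_eq_self_of_disjoint hdisj]
  linarith

/-- The graph `NO^ε(2m,2)`: vertices `{a : ϑ_d(a) = 1}`, distinct `a, b` adjacent iff
`⟨a,b⟩ = 0`, is strongly regular with parameters
`(2^{2m-1} - ε 2^{m-1}, 2^{2m-2} - 1, 2^{2m-3} - 2, 2^{2m-3} + ε 2^{m-2})`. -/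
theorem stmt_5 (m : ℕ) (hm : 2 ≤ m) (d : Fin (2*m) → ZMod 2) :
    let ε : ℤ := if th0 m d = 0 then 1 else -1
    let X := {a : Fin (2*m) → ZMod 2 // th m d a = 1}
    let Adj : X → X → Prop := fun a b => a ≠ b ∧ symp m a.1 b.1 = 0
    -- v
    (Nat.card X : ℤ) = 2^(2*m - 1) - ε * 2^(m - 1)
    -- k
    ∧ (∀ a : X, (Nat.card {b : X // Adj a b} : ℤ) = 2^(2*m - 2) - 1)
    -- λ
    ∧ (∀ a b : X, Adj a b →
        (Nat.card {c : X // Adj a c ∧ Adj b c} : ℤ) = 2^(2*m - 3) - 2)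
    -- μ
    ∧ (∀ a b : X, a ≠ b → ¬ Adj a b →
        (Nat.card {c : X // Adj a c ∧ Adj b c} : ℤ) = 2^(2*m - 3) + ε * 2^(m - 2)) := by
  intro ε X Adj
  exact ⟨natCard_vertices (by omega) d, natCard_neighbors (by omega) d,
    natCard_commonNeighbors_of_adj hm d, natCard_commonNeighbors_of_not_adj hm d⟩
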